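/- Any simple directed cycle in the 2-D grid graph, traversed by unit moves in the four cardinal directions, must contain at least one turn from the set {East→South, South→West, West→North, North→East} and at least one turn from the set {East→North, North→West, West→South, South→East}; hence forbidding one clockwise turn and one counter-clockwise turn from appropriate positions can break all cycles. -/

import Mathlib

/-- The four cardinal unit moves on ℤ × ℤ. -/
inductive Dir
  | N | S | E | W
deriving DecidableEq

/-- Unit displacement vector of a move. -/
def Dir.vec : Dir → ℤ × ℤ
  | .N => (0, 1)
  | .S => (0, -1)
  | .E => (1, 0)
  | .W => (-1, 0)

/-- Opposite (180°-reversed) direction. -/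
def Dir.opp : Dir → Dir
  | .N => .S
  | .S => .N
  | .E => .W
  | .W => .E

/-- Total displacement of a move sequence. -/
def disp (l : List Dir) : ℤ × ℤ :=
  (l.map Dir.vec).sum

/-- The cyclic successor move: the move following move `i`, wrapping from the
    last move back to the first. -/
def cyclicNext (l : List Dir) (i : ℕ) (hi : i < l.length) : Dir :=
  l.get ⟨(i + 1) % l.length, Nat.mod_lt _ (Nat.pos_of_ne_zero (by omega))⟩

lemma disp_fst (l : List Dir) : (disp l).1 = (l.count Dir.E : ℤ) - l.count Dir.W := by
  induction l with
  | nil => simp [disp]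
  | cons d t ih =>
    cases d <;> simp [disp, List.count_cons, Dir.vec] at ih ⊢ <;> omega

lemma disp_snd (l : List Dir) : (disp l).2 = (l.count Dir.N : ℤ) - l.count Dir.S := by
  induction l with
  | nil => simp [disp]
  | cons d t ih =>
    cases d <;> simp [disp, List.count_cons, Dir.vec] at ih ⊢ <;> omega

lemma prop_forward (l : List Dir) (P : Dir → Prop)
    (h : ∀ i (hi : i < l.length), P (l.get ⟨i, hi⟩) → P (cyclicNext l i hi))
    (j : ℕ) (hj : j < l.length) (hP : P (l.get ⟨j, hj⟩)) :
    ∀ i (hi : i < l.length), P (l.get ⟨i, hi⟩) := by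
  have hn : 0 < l.length := by omega
  have key : ∀ k, P (l.get ⟨(j + k) % l.length, Nat.mod_lt _ hn⟩) := by
    intro k
    induction k with
    | zero => simpa [Nat.mod_eq_of_lt hj] using hP
    | succ k ih =>
      have h2 := h _ (Nat.mod_lt _ hn) ih
      unfold cyclicNext at h2
      have e : ((j + k) % l.length + 1) % l.length = (j + (k + 1)) % l.length := by
        conv_rhs => rw [show j + (k + 1) = (j + k) + 1 from rfl, ← Nat.mod_add_mod]
      simpa [e] using h2
  intro i hi
  have e : (j + (i + l.length - j)) % l.length = i := by
    have : j + (i + l.length - j) = i + l.length := by omega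
    rw [this, Nat.add_mod_right, Nat.mod_eq_of_lt hi]
  have := key (i + l.length - j)
  simpa [e] using this

/-- Key lemma of the Turn Model for south-last routing: a nonempty closed
    directed cycle in the 2-D grid (a move sequence with zero total
    displacement), taken with no immediate 180° reversals (cyclically),
    must contain (cyclically) at least one of the turns East→South or
    West→South.  Hence forbidding these turns (one clockwise turn E→S and one
    counter-clockwise turn W→S) breaks all cycles: a cycle consisting only of
    turns avoiding West→South and East→South cannot close. -/
theorem cycle_contains_turn_into_south (l : List Dir) (hne : l ≠ [])
    (hclosed : disp l = 0)
    (hnr : ∀ i : ℕ, ∀ hi : i < l.length, cyclicNext l i hi ≠ (l.get ⟨i, hi⟩).opp) :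
    ∃ i : ℕ, ∃ hi : i < l.length,
      (l.get ⟨i, hi⟩ = Dir.E ∨ l.get ⟨i, hi⟩ = Dir.W) ∧ cyclicNext l i hi = Dir.S := by
  by_contra hcon
  push_neg at hcon
  have hn : 0 < l.length := List.length_pos_iff.mpr hne
  -- whenever the next move is S, the current move is S
  have hback : ∀ i (hi : i < l.length), cyclicNext l i hi = Dir.S → l.get ⟨i, hi⟩ = Dir.S := by
    intro i hi hS
    have h1 := hcon i hi
    have h2 := hnr i hi
    cases hd : l.get ⟨i, hi⟩ with
    | S => rfl
    | N => rw [hd] at h2; exact absurd hS (by simpa [Dir.opp] using h2)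
    | E => exact absurd hS (h1 (Or.inl hd))
    | W => exact absurd hS (h1 (Or.inr hd))
  by_cases hall : ∀ i (hi : i < l.length), l.get ⟨i, hi⟩ = Dir.S
  · -- all moves are S: vertical displacement is -length ≠ 0
    have hS : ∀ b ∈ l, b = Dir.S := by
      intro b hb
      obtain ⟨k, hk⟩ := List.mem_iff_get.mp hb
      rw [← hk]; exact hall k k.isLt
    have hcs : l.count Dir.S = l.length :=
      List.count_eq_length.mpr (fun b hb => (hS b hb).symm)
    have hcn : l.count Dir.N = 0 := by
      rw [List.count_eq_zero]
      intro hmem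
      exact absurd (hS _ hmem) (by decide)
    have h3 : (l.count Dir.N : ℤ) - l.count Dir.S = 0 := by rw [← disp_snd, hclosed]; rfl
    rw [hcs, hcn] at h3
    omega
  · -- some move is not S; then no move is S, and no move is N either
    push_neg at hall
    obtain ⟨j, hj, hjS⟩ := hall
    have hnoS : ∀ i (hi : i < l.length), l.get ⟨i, hi⟩ ≠ Dir.S := by
      apply prop_forward l (fun d => d ≠ Dir.S) _ j hj hjS
      intro i hi hP hS
      exact hP (hback i hi hS)
    have hSnot : Dir.S ∉ l := by
      intro hmem
      obtain ⟨k, hk⟩ := List.mem_iff_get.mp hmem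
      exact hnoS k k.isLt hk
    have hcs : l.count Dir.S = 0 := List.count_eq_zero.mpr hSnot
    have hd2 : (l.count Dir.N : ℤ) - l.count Dir.S = 0 := by rw [← disp_snd, hclosed]; rfl
    rw [hcs] at hd2
    have hcn2 : l.count Dir.N = 0 := by omega
    have hNnot : Dir.N ∉ l := List.count_eq_zero.mp hcn2
    have hEW : ∀ i (hi : i < l.length), l.get ⟨i, hi⟩ = Dir.E ∨ l.get ⟨i, hi⟩ = Dir.W := by
      intro i hi
      cases hd : l.get ⟨i, hi⟩ with
      | E => exact Or.inl rfl
      | W => exact Or.inr rfl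
      | N => exact absurd (hd ▸ List.get_mem l ⟨i, hi⟩) hNnot
      | S => exact absurd hd (hnoS i hi)
    have hnextEW : ∀ i (hi : i < l.length),
        cyclicNext l i hi = Dir.E ∨ cyclicNext l i hi = Dir.W := by
      intro i hi
      exact hEW _ _
    -- all moves equal the first move
    have h0 := hEW 0 hn
    rcases h0 with h0 | h0
    · -- all E
      have hiE : ∀ i (hi : i < l.length), l.get ⟨i, hi⟩ = Dir.E := by
        apply prop_forward l (fun d => d = Dir.E) _ 0 hn h0
        intro i hi hP
        have h2 := hnr i hi
        rw [hP] at h2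
        rcases hnextEW i hi with h | h
        · exact h
        · exact absurd h (by simpa [Dir.opp] using h2)
      have hWnot : Dir.W ∉ l := by
        intro hmem
        obtain ⟨k, hk⟩ := List.mem_iff_get.mp hmem
        exact absurd (hk ▸ hiE k k.isLt) (by decide)
      have hce : l.count Dir.E = l.length :=
        List.count_eq_length.mpr (fun b hb => by
          obtain ⟨k, hk⟩ := List.mem_iff_get.mp hb
          rw [← hk, hiE k k.isLt])
      have h3 : (l.count Dir.E : ℤ) - l.count Dir.W = 0 := by rw [← disp_fst, hclosed]; rfl
      rw [hce, List.count_eq_zero.mpr hWnot] at h3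
      omega
    · -- all W
      have hiW : ∀ i (hi : i < l.length), l.get ⟨i, hi⟩ = Dir.W := by
        apply prop_forward l (fun d => d = Dir.W) _ 0 hn h0
        intro i hi hP
        have h2 := hnr i hi
        rw [hP] at h2
        rcases hnextEW i hi with h | h
        · exact absurd h (by simpa [Dir.opp] using h2)
        · exact h
      have hEnot : Dir.E ∉ l := by
        intro hmem
        obtain ⟨k, hk⟩ := List.mem_iff_get.mp hmem
        exact absurd (hk ▸ hiW k k.isLt) (by decide)
      have hcw : l.count Dir.W = l.length :=
        List.count_eq_length.mpr (fun b hb => by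
          obtain ⟨k, hk⟩ := List.mem_iff_get.mp hb
          rw [← hk, hiW k k.isLt])
      have h3 : (l.count Dir.E : ℤ) - l.count Dir.W = 0 := by rw [← disp_fst, hclosed]; rfl
      rw [hcw, List.count_eq_zero.mpr hEnot] at h3
      omega
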